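/- arXiv:2207.04944 — 2 statements merged into one kernel-verified Lean document; each statement's English description precedes it below -/
import Mathlib

section
/- There exists a function f ∈ L²(△, |z|² dV) on the unit disc △ ⊂ ℂ such that R₁f(z) = ∫_△ f(ζ)/|ζ−z| dV(ζ) does not belong to L²(△, |z|² dV); hence the weighted boundedness of R_α on L^p(D,μ) fails in general without the assumption μ ∈ A_p. -/
/-!
On the dyadic annulus `2⁻ⁿ⁻¹ < |z| ≤ 2⁻ⁿ` put `f = 4ⁿ / (n + 1)`, a discrete version of
`|z|⁻² / log (2 / |z|)`. The annulus has area `(3π/4) 4⁻ⁿ`, so `∫ f² |z|² ≤ (3π/4) ∑ 1/(n+1)² < ∞`,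
while `∫ f = (3π/4) ∑ 1/(n+1) = ∞`. As `|ζ - z| ≤ 2` on the disc, `R₁f(z) ≥ ½ ∫ f = ∞` at every
point of the disc, and `∞` is not square integrable against `|z|² dV`.
-/

open MeasureTheory Metric Real Function
open scoped ENNReal

noncomputable section

namespace RieszCounterexample

theorem tsum_ofReal_eq_top_of_not_summable {ι : Type*} {f : ι → ℝ} (hf : ∀ i, 0 ≤ f i)
    (h : ¬Summable f) : ∑' i, ENNReal.ofReal (f i) = ⊤ := by
  by_contra h'
  exact h ((ENNReal.summable_toReal h').congr fun i => ENNReal.toReal_ofReal (hf i))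

theorem setLIntegral_eq_top_of_forall_eq_top {α : Type*} [MeasurableSpace α] {μ : Measure α}
    {f : α → ℝ≥0∞} {s : Set α} (hs : MeasurableSet s) (hμs : μ s ≠ 0) (hf : ∀ x ∈ s, f x = ⊤) :
    ∫⁻ x in s, f x ∂μ = ⊤ := by
  rw [setLIntegral_congr_fun hs hf, setLIntegral_const, ENNReal.top_mul hμs]

theorem lintegral_div_norm_sub_eq_top {E : Type*} [NormedAddCommGroup E] [MeasurableSpace E]
    [OpensMeasurableSpace E] (μ : Measure E) {g : E → ℝ≥0∞}
    (hg : ∫⁻ ζ in ball 0 1, g ζ ∂μ = ⊤) {z : E} (hz : z ∈ ball (0 : E) 1) :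
    ∫⁻ ζ in ball 0 1, g ζ / ENNReal.ofReal ‖ζ - z‖ ∂μ = ⊤ := by
  have hdist : ∀ ζ ∈ ball (0 : E) 1, ENNReal.ofReal ‖ζ - z‖ ≤ 2 := fun ζ hζ => by
    have hζ' := mem_ball_zero_iff.mp hζ
    have hz' := mem_ball_zero_iff.mp hz
    rw [← ENNReal.ofReal_ofNat]
    exact ENNReal.ofReal_le_ofReal (by linarith [norm_sub_le ζ z])
  refine top_unique ?_
  calc ⊤ = (∫⁻ ζ in ball 0 1, g ζ ∂μ) / 2 := by
        rw [hg, ENNReal.top_div_of_ne_top ENNReal.ofNat_ne_top]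
    _ = ∫⁻ ζ in ball 0 1, g ζ / 2 ∂μ := by
        simp_rw [div_eq_mul_inv]
        exact (lintegral_mul_const' _ _ (by simp)).symm
    _ ≤ _ := setLIntegral_mono' measurableSet_ball fun ζ hζ =>
        ENNReal.div_le_div_left (hdist ζ hζ) _

section Annuli

variable {E : Type*} [NormedAddCommGroup E]

def dyadicAnnulus (n : ℕ) : Set E :=
  closedBall 0 ((2 : ℝ) ^ n)⁻¹ \ closedBall 0 ((2 : ℝ) ^ (n + 1))⁻¹

def dyadicIndex (z : E) : ℕ := ⌊logb 2 ‖z‖⁻¹⌋₊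

theorem mem_dyadicAnnulus {z : E} {n : ℕ} :
    z ∈ dyadicAnnulus n ↔ ((2 : ℝ) ^ (n + 1))⁻¹ < ‖z‖ ∧ ‖z‖ ≤ ((2 : ℝ) ^ n)⁻¹ := by
  simp only [dyadicAnnulus, Set.mem_sdiff, mem_closedBall, dist_zero_right, not_le]
  exact and_comm

theorem dyadicAnnulus_subset (n : ℕ) : dyadicAnnulus n ⊆ closedBall (0 : E) 1 \ {0} := by
  intro z hz
  obtain ⟨h₁, h₂⟩ := mem_dyadicAnnulus.mp hz
  refine ⟨mem_closedBall_zero_iff.mpr (h₂.trans (inv_le_one_of_one_le₀ (one_le_pow₀ one_le_two))),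
    fun h₀ => ?_⟩
  rw [Set.mem_singleton_iff.mp h₀, norm_zero] at h₁
  exact (h₁.trans' (by positivity)).false

theorem dyadicIndex_eq_iff {z : E} (hz₀ : z ≠ 0) (hz₁ : ‖z‖ ≤ 1) {n : ℕ} :
    dyadicIndex z = n ↔ z ∈ dyadicAnnulus n := by
  have hz : 0 < ‖z‖ := norm_pos_iff.mpr hz₀
  rw [dyadicIndex, Nat.floor_eq_iff (logb_nonneg one_lt_two (one_le_inv₀ hz |>.mpr hz₁)),
    mem_dyadicAnnulus, le_logb_iff_rpow_le one_lt_two (inv_pos.mpr hz),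
    logb_lt_iff_lt_rpow one_lt_two (inv_pos.mpr hz), ← Nat.cast_succ, rpow_natCast, rpow_natCast,
    le_inv_comm₀ hz (by positivity), inv_lt_comm₀ hz (by positivity), and_comm]

theorem dyadicIndex_eq_of_mem {z : E} {n : ℕ} (hz : z ∈ dyadicAnnulus n) : dyadicIndex z = n :=
  have hz' := dyadicAnnulus_subset n hz
  (dyadicIndex_eq_iff hz'.2 (mem_closedBall_zero_iff.mp hz'.1)).mpr hz

theorem pairwise_disjoint_dyadicAnnulus : Pairwise (Disjoint on (dyadicAnnulus : ℕ → Set E)) :=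
  fun _ _ hmn => Set.disjoint_left.mpr fun _ hm hn =>
    hmn ((dyadicIndex_eq_of_mem hm).symm.trans (dyadicIndex_eq_of_mem hn))

theorem iUnion_dyadicAnnulus : ⋃ n, dyadicAnnulus n = closedBall (0 : E) 1 \ {0} := by
  refine subset_antisymm (Set.iUnion_subset dyadicAnnulus_subset) fun z ⟨hz₁, hz₀⟩ => ?_
  exact Set.mem_iUnion.mpr ⟨_, (dyadicIndex_eq_iff hz₀ (mem_closedBall_zero_iff.mp hz₁)).mp rfl⟩

variable [MeasurableSpace E] [OpensMeasurableSpace E]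

theorem measurableSet_dyadicAnnulus (n : ℕ) : MeasurableSet (dyadicAnnulus n : Set E) :=
  measurableSet_closedBall.diff measurableSet_closedBall

theorem measurable_dyadicIndex : Measurable (dyadicIndex : E → ℕ) :=
  (measurable_norm.inv.log.div_const _).nat_floor

theorem lintegral_ball_eq_tsum_dyadicAnnulus [NormedSpace ℝ E] [BorelSpace E]
    [FiniteDimensional ℝ E] [Nontrivial E] (μ : Measure E) [μ.IsAddHaarMeasure] (g : E → ℝ≥0∞) :
    ∫⁻ z in ball 0 1, g z ∂μ = ∑' n, ∫⁻ z in dyadicAnnulus n, g z ∂μ := by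
  have hball : (ball (0 : E) 1 : Set E) =ᵐ[μ] ⋃ n, dyadicAnnulus n := by
    rw [iUnion_dyadicAnnulus]
    refine (ae_eq_of_subset_of_measure_ge ball_subset_closedBall
      (Measure.addHaar_closedBall_eq_addHaar_ball μ 0 1).le measurableSet_ball.nullMeasurableSet
      measure_closedBall_lt_top.ne).trans (sdiff_null_ae_eq_self (measure_singleton 0)).symm
  rw [setLIntegral_congr hball,
    lintegral_iUnion measurableSet_dyadicAnnulus pairwise_disjoint_dyadicAnnulus]

end Annuli

theorem volume_dyadicAnnulus (n : ℕ) :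
    volume (dyadicAnnulus n : Set ℂ) = ENNReal.ofReal (3 * π / 4 / 4 ^ n) := by
  have hsub : closedBall (0 : ℂ) ((2 : ℝ) ^ (n + 1))⁻¹ ⊆ closedBall 0 ((2 : ℝ) ^ n)⁻¹ :=
    closedBall_subset_closedBall <|
      inv_anti₀ (by positivity) (pow_le_pow_right₀ one_le_two n.le_succ)
  rw [dyadicAnnulus, measure_sdiff hsub measurableSet_closedBall.nullMeasurableSet
      measure_closedBall_lt_top.ne, Complex.volume_closedBall, Complex.volume_closedBall,
    ← ENNReal.ofReal_coe_nnreal, NNReal.coe_real_pi, ← ENNReal.ofReal_pow (by positivity),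
    ← ENNReal.ofReal_pow (by positivity), ← ENNReal.ofReal_mul (by positivity),
    ← ENNReal.ofReal_mul (by positivity), ← ENNReal.ofReal_sub _ (by positivity),
    show (4 : ℝ) = 2 ^ 2 by norm_num, ← pow_mul]
  congr 1
  field_simp
  ring

def dyadicInvSqLog (z : ℂ) : ℝ := 4 ^ dyadicIndex z / (dyadicIndex z + 1)

theorem dyadicInvSqLog_nonneg (z : ℂ) : 0 ≤ dyadicInvSqLog z := by
  unfold dyadicInvSqLog
  positivity

theorem measurable_dyadicInvSqLog : Measurable dyadicInvSqLog :=
  (measurable_from_nat (f := fun k : ℕ => (4 : ℝ) ^ k / (k + 1))).comp measurable_dyadicIndex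

theorem dyadicInvSqLog_of_mem {z : ℂ} {n : ℕ} (hz : z ∈ dyadicAnnulus n) :
    dyadicInvSqLog z = 4 ^ n / (n + 1) := by
  rw [dyadicInvSqLog, dyadicIndex_eq_of_mem hz]

theorem setLIntegral_dyadicAnnulus_sq_mul_normSq_le (n : ℕ) :
    ∫⁻ z in dyadicAnnulus n, ENNReal.ofReal (dyadicInvSqLog z) ^ 2 * ENNReal.ofReal (‖z‖ ^ 2)
      ≤ ENNReal.ofReal (3 * π / 4 / (n + 1) ^ 2) := by
  have hbound : ∀ z ∈ dyadicAnnulus n,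
      ENNReal.ofReal (dyadicInvSqLog z) ^ 2 * ENNReal.ofReal (‖z‖ ^ 2)
        ≤ ENNReal.ofReal (4 ^ n / (n + 1) ^ 2) := by
    intro z hz
    have hnorm : ‖z‖ ^ 2 ≤ ((2 : ℝ) ^ n)⁻¹ ^ 2 :=
      pow_le_pow_left₀ (norm_nonneg z) (mem_dyadicAnnulus.mp hz).2 2
    rw [dyadicInvSqLog_of_mem hz, ← ENNReal.ofReal_pow (by positivity),
      ← ENNReal.ofReal_mul (by positivity)]
    refine ENNReal.ofReal_le_ofReal ((mul_le_mul_of_nonneg_left hnorm (by positivity)).trans_eq ?_)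
    rw [show (4 : ℝ) = 2 ^ 2 by norm_num, ← pow_mul]
    field_simp
    ring
  calc _ ≤ ∫⁻ _ in dyadicAnnulus n, ENNReal.ofReal (4 ^ n / (n + 1) ^ 2) :=
        setLIntegral_mono' (measurableSet_dyadicAnnulus n) hbound
    _ = ENNReal.ofReal (3 * π / 4 / (n + 1) ^ 2) := by
        rw [setLIntegral_const, volume_dyadicAnnulus, ← ENNReal.ofReal_mul (by positivity)]
        congr 1
        field_simp

theorem setLIntegral_dyadicAnnulus (n : ℕ) :
    ∫⁻ z in dyadicAnnulus n, ENNReal.ofReal (dyadicInvSqLog z)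
      = ENNReal.ofReal (3 * π / 4 / (n + 1)) := by
  rw [setLIntegral_congr_fun (measurableSet_dyadicAnnulus n)
      fun z hz => by rw [dyadicInvSqLog_of_mem hz],
    setLIntegral_const, volume_dyadicAnnulus, ← ENNReal.ofReal_mul (by positivity)]
  congr 1
  field_simp

theorem lintegral_ball_sq_mul_normSq_lt_top :
    ∫⁻ z in ball (0 : ℂ) 1,
      ENNReal.ofReal (dyadicInvSqLog z) ^ 2 * ENNReal.ofReal (‖z‖ ^ 2) < ⊤ := by
  have hsum : Summable fun n : ℕ => 3 * π / 4 / ((n : ℝ) + 1) ^ 2 :=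
    (((_root_.summable_nat_add_iff 1).mpr (summable_one_div_nat_pow.mpr one_lt_two)).mul_left
      (3 * π / 4)).congr fun n => by push_cast; ring
  rw [lintegral_ball_eq_tsum_dyadicAnnulus]
  exact (ENNReal.tsum_le_tsum setLIntegral_dyadicAnnulus_sq_mul_normSq_le).trans_lt
    hsum.tsum_ofReal_lt_top

theorem lintegral_ball_eq_top : ∫⁻ z in ball (0 : ℂ) 1, ENNReal.ofReal (dyadicInvSqLog z) = ⊤ := by
  have hdiv : ¬Summable fun n : ℕ => 3 * π / 4 / ((n : ℝ) + 1) := by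
    simp_rw [div_eq_mul_one_div (3 * π / 4)]
    rw [summable_mul_left_iff (by positivity)]
    exact_mod_cast mt (_root_.summable_nat_add_iff 1).mp not_summable_one_div_natCast
  rw [lintegral_ball_eq_tsum_dyadicAnnulus]
  simp_rw [setLIntegral_dyadicAnnulus]
  exact tsum_ofReal_eq_top_of_not_summable (fun n => by positivity) hdiv

end RieszCounterexample

open RieszCounterexample in
/-- There exists a (nonnegative) function `f ∈ L²(△, |z|² dV)` on the unit disc `△ ⊂ ℂ`
such that `R₁f(z) = ∫_△ f(ζ)/|ζ−z| dV(ζ)` does not belong to `L²(△, |z|² dV)`; hence the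
weighted boundedness of `R_α` on `L^p(D,μ)` fails in general without the assumption
`μ ∈ A_p`. -/
theorem riesz_weighted_counterexample :
    ∃ f : ℂ → ℝ, Measurable f ∧ (∀ z, 0 ≤ f z) ∧
      (∫⁻ z in Metric.ball (0 : ℂ) 1,
          ENNReal.ofReal (f z) ^ 2 * ENNReal.ofReal (‖z‖ ^ 2)) < ⊤ ∧
      (∫⁻ z in Metric.ball (0 : ℂ) 1,
          (∫⁻ ζ in Metric.ball (0 : ℂ) 1,
              ENNReal.ofReal (f ζ) / ENNReal.ofReal ‖ζ - z‖) ^ 2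
            * ENNReal.ofReal (‖z‖ ^ 2)) = ⊤ := by
  refine ⟨dyadicInvSqLog, measurable_dyadicInvSqLog, dyadicInvSqLog_nonneg,
    lintegral_ball_sq_mul_normSq_lt_top, top_unique ?_⟩
  have hR : ∀ z ∈ ball (0 : ℂ) 1 \ {0},
      (∫⁻ ζ in ball (0 : ℂ) 1, ENNReal.ofReal (dyadicInvSqLog ζ) / ENNReal.ofReal ‖ζ - z‖) ^ 2
        * ENNReal.ofReal (‖z‖ ^ 2) = ⊤ := by
    rintro z ⟨hz, hz₀⟩
    rw [lintegral_div_norm_sub_eq_top volume lintegral_ball_eq_top hz, ENNReal.top_pow two_ne_zero,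
      ENNReal.top_mul (by simpa using hz₀)]
  have hvol : volume (ball (0 : ℂ) 1 \ {0}) ≠ 0 := by
    rw [measure_sdiff_null (measure_singleton 0)]
    exact (measure_ball_pos volume 0 one_pos).ne'
  exact (setLIntegral_eq_top_of_forall_eq_top (measurableSet_ball.diff (measurableSet_singleton 0))
    hvol hR).symm.le.trans (lintegral_mono_set Set.sdiff_subset)
end
end

section
/- The map ψ : △ × △* → ℍ, ψ(w₁, w₂) = (w₁w₂, w₂), is a biholomorphism from the product of the unit disc and the punctured unit disc onto the Hartogs triangle, with holomorphic inverse φ(z₁, z₂) = (z₁/z₂, z₂). -/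
open MeasureTheory

noncomputable section

/-- The Hartogs triangle `ℍ = {(z₁,z₂) ∈ ℂ² : |z₁| < |z₂| < 1}`. -/
def hartogsTriangle : Set (ℂ × ℂ) := {z | ‖z.1‖ < ‖z.2‖ ∧ ‖z.2‖ < 1}

/-- `ψ(w₁,w₂) = (w₁w₂, w₂)`. -/
def psiMap (w : ℂ × ℂ) : ℂ × ℂ := (w.1 * w.2, w.2)

/-- `φ(z₁,z₂) = (z₁/z₂, z₂)`. -/
def phiMap (z : ℂ × ℂ) : ℂ × ℂ := (z.1 / z.2, z.2)

open Metric Set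

lemma snd_ne_zero_of_mem_hartogsTriangle {z : ℂ × ℂ} (hz : z ∈ hartogsTriangle) : z.2 ≠ 0 :=
  norm_pos_iff.mp ((norm_nonneg _).trans_lt hz.1)

lemma phiMap_psiMap {w : ℂ × ℂ} (hw : w.2 ≠ 0) : phiMap (psiMap w) = w := by
  simp [phiMap, psiMap, mul_div_cancel_right₀ _ hw]

lemma psiMap_phiMap {z : ℂ × ℂ} (hz : z.2 ≠ 0) : psiMap (phiMap z) = z := by
  simp [phiMap, psiMap, div_mul_cancel₀ _ hz]

lemma mapsTo_psiMap_hartogsTriangle :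
    MapsTo psiMap (ball (0 : ℂ) 1 ×ˢ (ball (0 : ℂ) 1 \ {0})) hartogsTriangle := by
  rintro ⟨w₁, w₂⟩ ⟨hw₁, hw₂, hw₂₀⟩
  rw [mem_ball_zero_iff] at hw₁ hw₂
  have hpos : 0 < ‖w₂‖ := norm_pos_iff.mpr hw₂₀
  refine ⟨?_, hw₂⟩
  calc ‖w₁ * w₂‖ = ‖w₁‖ * ‖w₂‖ := norm_mul _ _
    _ < 1 * ‖w₂‖ := mul_lt_mul_of_pos_right hw₁ hpos
    _ = ‖w₂‖ := one_mul _

lemma mapsTo_phiMap_hartogsTriangle :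
    MapsTo phiMap hartogsTriangle (ball (0 : ℂ) 1 ×ˢ (ball (0 : ℂ) 1 \ {0})) := by
  intro z hz
  have hz₂ := snd_ne_zero_of_mem_hartogsTriangle hz
  refine ⟨?_, mem_ball_zero_iff.mpr hz.2, hz₂⟩
  rw [mem_ball_zero_iff, phiMap, norm_div, div_lt_one (norm_pos_iff.mpr hz₂)]
  exact hz.1

lemma differentiable_psiMap : Differentiable ℂ psiMap :=
  (differentiable_fst.mul differentiable_snd).prodMk differentiable_snd

lemma differentiableOn_phiMap : DifferentiableOn ℂ phiMap {z | z.2 ≠ 0} := by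
  unfold phiMap
  simp only [div_eq_mul_inv]
  fun_prop (disch := exact fun _ ↦ id)

/-- The map `ψ : △ × △* → ℍ`, `ψ(w₁,w₂) = (w₁w₂, w₂)`, is a biholomorphism from the
product of the unit disc and the punctured unit disc onto the Hartogs triangle, with
holomorphic inverse `φ(z₁,z₂) = (z₁/z₂, z₂)`. -/
theorem psi_biholo_hartogs :
    Set.BijOn psiMap ((Metric.ball (0 : ℂ) 1) ×ˢ (Metric.ball (0 : ℂ) 1 \ {0}))
        hartogsTriangle ∧
    DifferentiableOn ℂ psiMap ((Metric.ball (0 : ℂ) 1) ×ˢ (Metric.ball (0 : ℂ) 1 \ {0})) ∧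
    DifferentiableOn ℂ phiMap hartogsTriangle ∧
    Set.EqOn (phiMap ∘ psiMap) id ((Metric.ball (0 : ℂ) 1) ×ˢ (Metric.ball (0 : ℂ) 1 \ {0})) ∧
    Set.EqOn (psiMap ∘ phiMap) id hartogsTriangle := by
  have hleft : EqOn (phiMap ∘ psiMap) id (ball (0 : ℂ) 1 ×ˢ (ball (0 : ℂ) 1 \ {0})) :=
    fun _ hw => phiMap_psiMap hw.2.2
  have hright : EqOn (psiMap ∘ phiMap) id hartogsTriangle :=
    fun _ hz => psiMap_phiMap (snd_ne_zero_of_mem_hartogsTriangle hz)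
  refine ⟨InvOn.bijOn ⟨hleft, hright⟩ mapsTo_psiMap_hartogsTriangle
      mapsTo_phiMap_hartogsTriangle, differentiable_psiMap.differentiableOn,
    differentiableOn_phiMap.mono fun _ => snd_ne_zero_of_mem_hartogsTriangle, hleft, hright⟩
end
end
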